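/- For a finite simple graph G = (V, E), the chromatic polynomial satisfies P_G(q) = q^{|V|} · Ξ_G(q), where Ξ_G(q) = 1 + Σ_{k≥1} Σ_{{R_1,...,R_k}} Π_{i=1}^k z(R_i, q), the inner sum is over unordered families of pairwise disjoint connected subsets R_i ⊆ V with |R_i| ≥ 2, and z(R, q) = q^{-(|R|-1)} Σ_{g connected spanning subgraph of G|_R} (-1)^{|E_g|}. -/

import Mathlib

attribute [-instance] Sym2.instPartialOrder

open scoped Classical

namespace BC

variable {V : Type*}

/-- The set of vertices incident to at least one edge of `τ`. -/
noncomputable def supp [Fintype V] (τ : Finset (Sym2 V)) : Finset V :=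
  Finset.univ.filter (fun v => ∃ e ∈ τ, v ∈ e)

/-- The graph on vertex set `R` with edge set `F` is connected. -/
def ConnOn (R : Finset V) (F : Finset (Sym2 V)) : Prop :=
  (SimpleGraph.induce (R : Set V) (SimpleGraph.fromEdgeSet (F : Set (Sym2 V)))).Connected

/-- Edges of `G` with both endpoints in `R` (edge set of the induced subgraph `G|_R`). -/
noncomputable def edgesIn [Fintype V] [DecidableEq V] (G : SimpleGraph V) [DecidableRel G.Adj]
    (R : Finset V) : Finset (Sym2 V) :=
  G.edgeFinset.filter (fun e => ∀ v ∈ e, v ∈ R)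

/-- `g` is (the edge set of) a connected spanning subgraph of `G|_R`. -/
def IsCSS [Fintype V] [DecidableEq V] (G : SimpleGraph V) [DecidableRel G.Adj]
    (R : Finset V) (g : Finset (Sym2 V)) : Prop :=
  g ⊆ edgesIn G R ∧ ConnOn R g

/-- `τ` is (the edge set of) a spanning tree of `G|_R`. -/
def IsSpanningTree [Fintype V] [DecidableEq V] (G : SimpleGraph V) [DecidableRel G.Adj]
    (R : Finset V) (τ : Finset (Sym2 V)) : Prop :=
  IsCSS G R τ ∧ τ.card = R.card - 1

/-- A forest: an edge set containing no cycle. -/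
def IsForest (F : Finset (Sym2 V)) : Prop :=
  (SimpleGraph.fromEdgeSet (F : Set (Sym2 V))).IsAcyclic

/-- `τ` is the edge set of a nontrivial tree component of the forest `F`. -/
def IsTreeComponent [Fintype V] (F τ : Finset (Sym2 V)) : Prop :=
  τ ⊆ F ∧ τ.Nonempty ∧ ConnOn (supp τ) τ ∧ ∀ e ∈ F \ τ, ∀ v ∈ e, v ∉ supp τ

/-- `C` is the edge set of a simple circuit (cycle) of `G`. -/
def IsCircuit (G : SimpleGraph V) (C : Finset (Sym2 V)) : Prop :=
  ∃ (v : V) (w : G.Walk v v), w.IsCycle ∧ w.edges.toFinset = C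

/-- `B` is a broken circuit of `G`: a simple circuit minus its maximal edge. -/
def IsBrokenCircuit [LinearOrder (Sym2 V)] (G : SimpleGraph V) (B : Finset (Sym2 V)) : Prop :=
  ∃ C e, IsCircuit G C ∧ e ∈ C ∧ (∀ f ∈ C, f ≤ e) ∧ B = C.erase e

/-- `m` is a partition scheme in `G`. -/
def IsPartitionScheme [Fintype V] [DecidableEq V] (G : SimpleGraph V) [DecidableRel G.Adj]
    (m : Finset (Sym2 V) → Finset (Sym2 V)) : Prop :=
  ∀ R : Finset V, 2 ≤ R.card → ConnOn R (edgesIn G R) →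
    (∀ τ, IsSpanningTree G R τ → τ ⊆ m τ ∧ IsCSS G R (m τ)) ∧
    (∀ g, IsCSS G R g → ∃! τ, IsSpanningTree G R τ ∧ τ ⊆ g ∧ g ⊆ m τ)

/-- The minimal-tree partition scheme: `μ(τ)` adds to `τ` every edge `{x,y}` of `G|_R`
larger than all the edges on the path in `τ` from `x` to `y`. -/
noncomputable def mu [Fintype V] [DecidableEq V] (G : SimpleGraph V) [DecidableRel G.Adj]
    [LinearOrder (Sym2 V)] (R : Finset V) (τ : Finset (Sym2 V)) : Finset (Sym2 V) :=
  τ ∪ (edgesIn G R).filter (fun e => e ∉ τ ∧ ∀ x y : V, e = s(x, y) →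
    ∀ p : (SimpleGraph.fromEdgeSet (τ : Set (Sym2 V))).Walk x y, p.IsPath → ∀ f ∈ p.edges, f < e)

/-- All unordered pairs of distinct elements of `R`. -/
noncomputable def allPairs [DecidableEq V] (R : Finset V) : Finset (Sym2 V) :=
  ((R ×ˢ R).filter (fun p => p.1 ≠ p.2)).image (fun p => s(p.1, p.2))

/-- `f` takes the same value at the two endpoints of `e`. -/
def eqOn (f : V → ℕ) (e : Sym2 V) : Prop :=
  Sym2.lift ⟨fun x y => f x = f y, fun x y => propext ⟨Eq.symm, Eq.symm⟩⟩ e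

section PolymerAux

open SimpleGraph Finset

variable [Fintype V] [DecidableEq V]

/-- The graph on `V` with edge set `S`. -/
private def gsBC (S : Finset (Sym2 V)) : SimpleGraph V :=
  SimpleGraph.fromEdgeSet (S : Set (Sym2 V))

private lemma gs_adj {S : Finset (Sym2 V)} {u v : V} :
    (gsBC S).Adj u v ↔ s(u, v) ∈ S ∧ u ≠ v := by
  simp [gsBC, SimpleGraph.fromEdgeSet_adj]

/-- Number of connected components of the graph with edge set `S`. -/
private noncomputable def ncomp (S : Finset (Sym2 V)) : ℕ :=
  Nat.card (gsBC S).ConnectedComponent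

private lemma connOn_reachable {R : Finset V} {F S : Finset (Sym2 V)} (h : ConnOn R F)
    (hFS : F ⊆ S) {u v : V} (hu : u ∈ R) (hv : v ∈ R) : (gsBC S).Reachable u v := by
  have hr := h.preconnected ⟨u, Finset.mem_coe.mpr hu⟩ ⟨v, Finset.mem_coe.mpr hv⟩
  have h2 := hr.map (SimpleGraph.Embedding.induce (R : Set V)).toHom
  exact SimpleGraph.Reachable.mono
    (SimpleGraph.fromEdgeSet_mono (by exact_mod_cast hFS)) h2

private lemma walk_confined {P : Finset (Finset V)}
    (hdisj : (P : Set (Finset V)).Pairwise Disjoint)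
    {S : Finset (Sym2 V)} (hS : ∀ e ∈ S, ∃ R ∈ P, ∀ v ∈ e, v ∈ R)
    {R : Finset V} (hR : R ∈ P) :
    ∀ {u v : V}, (gsBC S).Walk u v → u ∈ R → v ∈ R := by
  intro u v w
  induction w with
  | nil => exact id
  | @cons a b c h p ih =>
    intro ha
    refine ih ?_
    obtain ⟨he, hne⟩ := gs_adj.mp h
    obtain ⟨R', hR', hsub⟩ := hS _ he
    have haR' : a ∈ R' := hsub a (Sym2.mem_mk_left a b)
    have hbR' : b ∈ R' := hsub b (Sym2.mem_mk_right a b)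
    have hRR : R = R' := by
      by_contra hne'
      exact (Finset.disjoint_left.mp
        (hdisj (Finset.mem_coe.mpr hR) (Finset.mem_coe.mpr hR') hne')) ha haR'
    exact hRR ▸ hbR'

private lemma exists_incident_edge {S : Finset (Sym2 V)} {u v : V}
    (h : (gsBC S).Reachable u v) (hne : u ≠ v) : ∃ e ∈ S, u ∈ e := by
  obtain ⟨w⟩ := h
  cases w with
  | nil => exact absurd rfl hne
  | cons h p => exact ⟨_, (gs_adj.mp h).1, Sym2.mem_mk_left _ _⟩

private noncomputable def compSet (S : Finset (Sym2 V)) (v : V) : Finset V :=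
  Finset.univ.filter fun w => (gsBC S).Reachable v w

private lemma mem_compSet {S : Finset (Sym2 V)} {v w : V} :
    w ∈ compSet S v ↔ (gsBC S).Reachable v w := by
  simp [compSet]

private noncomputable def comps (S : Finset (Sym2 V)) : Finset (Finset V) :=
  (Finset.univ.filter fun v => ∃ e ∈ S, v ∈ e).image (compSet S)

/-- The hypotheses describing a decomposition of `S` into connected pieces supported on the
pairwise disjoint sets in `P`. -/
private def Spec (P : Finset (Finset V)) (S : Finset (Sym2 V)) : Prop :=
  (P : Set (Finset V)).Pairwise Disjoint ∧ (∀ R ∈ P, 2 ≤ R.card) ∧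
  (∀ e ∈ S, ∃ R ∈ P, ∀ v ∈ e, v ∈ R) ∧
  (∀ R ∈ P, ∀ u ∈ R, ∀ v ∈ R, (gsBC S).Reachable u v)

private lemma Spec.uniq {P : Finset (Finset V)} {S : Finset (Sym2 V)} (hspec : Spec P S)
    {R R' : Finset V} (hR : R ∈ P) (hR' : R' ∈ P) {v : V} (hv : v ∈ R) (hv' : v ∈ R') :
    R = R' := by
  by_contra hne
  exact (Finset.disjoint_left.mp
    (hspec.1 (Finset.mem_coe.mpr hR) (Finset.mem_coe.mpr hR') hne)) hv hv'

private lemma Spec.compSet_eq {P : Finset (Finset V)} {S : Finset (Sym2 V)} (hspec : Spec P S)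
    {R : Finset V} (hR : R ∈ P) {v : V} (hv : v ∈ R) : compSet S v = R := by
  ext w
  rw [mem_compSet]
  constructor
  · intro hr
    obtain ⟨p⟩ := hr
    exact walk_confined hspec.1 hspec.2.2.1 hR p hv
  · intro hw
    exact hspec.2.2.2 R hR v hv w hw

private lemma Spec.comps_eq {P : Finset (Finset V)} {S : Finset (Sym2 V)} (hspec : Spec P S) :
    comps S = P := by
  ext R'
  simp only [comps, Finset.mem_image, Finset.mem_filter, Finset.mem_univ, true_and]
  constructor
  · rintro ⟨v, ⟨e, he, hve⟩, rfl⟩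
    obtain ⟨R, hR, hsub⟩ := hspec.2.2.1 e he
    have hv : v ∈ R := hsub v hve
    rw [hspec.compSet_eq hR hv]
    exact hR
  · intro hR'
    obtain ⟨a, ha, b, hb, hab⟩ := Finset.one_lt_card.mp (hspec.2.1 R' hR')
    have hr : (gsBC S).Reachable a b := hspec.2.2.2 R' hR' a ha b hb
    obtain ⟨e, he, hae⟩ := exists_incident_edge hr hab
    exact ⟨a, ⟨e, he, hae⟩, hspec.compSet_eq hR' ha⟩

private lemma connOn_filter {S : Finset (Sym2 V)} {R : Finset V} (hne : R.Nonempty)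
    (hclosed : ∀ u ∈ R, ∀ x : V, (gsBC S).Adj u x → x ∈ R)
    (hconn : ∀ u ∈ R, ∀ v ∈ R, (gsBC S).Reachable u v) :
    ConnOn R (S.filter fun e => ∀ x ∈ e, x ∈ R) := by
  have key : ∀ (a b : V) (w : (gsBC S).Walk a b) (ha : a ∈ R) (hb : b ∈ R),
      (SimpleGraph.induce (R : Set V)
        (SimpleGraph.fromEdgeSet ((S.filter fun e => ∀ x ∈ e, x ∈ R) : Set (Sym2 V)))).Reachable
        ⟨a, Finset.mem_coe.mpr ha⟩ ⟨b, Finset.mem_coe.mpr hb⟩ := by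
    intro a b w
    induction w with
    | nil => intro ha hb; rfl
    | @cons a x b h p ih =>
      intro ha hb
      have hx : x ∈ R := hclosed a ha x h
      refine SimpleGraph.Reachable.trans ?_ (ih hx hb)
      apply SimpleGraph.Adj.reachable
      show (SimpleGraph.fromEdgeSet
        ((S.filter fun e => ∀ x ∈ e, x ∈ R) : Set (Sym2 V))).Adj a x
      obtain ⟨he, hne'⟩ := gs_adj.mp h
      rw [SimpleGraph.fromEdgeSet_adj]
      refine ⟨?_, hne'⟩
      simp only [Finset.coe_filter, Set.mem_setOf_eq]
      refine ⟨he, ?_⟩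
      intro y hy
      rcases Sym2.mem_iff.mp hy with rfl | rfl
      exacts [ha, hx]
  unfold ConnOn
  rw [SimpleGraph.connected_iff]
  constructor
  · rintro ⟨u, hu⟩ ⟨v, hv⟩
    obtain ⟨w⟩ := hconn u (Finset.mem_coe.mp hu) v (Finset.mem_coe.mp hv)
    exact key u v w (Finset.mem_coe.mp hu) (Finset.mem_coe.mp hv)
  · exact ⟨⟨hne.choose, Finset.mem_coe.mpr hne.choose_spec⟩⟩

private lemma connOn_mono {R : Finset V} {F F' : Finset (Sym2 V)} (hFF : F ⊆ F')
    (h : ConnOn R F) : ConnOn R F' := by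
  refine SimpleGraph.Connected.mono ?_ h
  intro a b hab
  exact SimpleGraph.fromEdgeSet_mono (by exact_mod_cast hFF) hab

private lemma spec_closed {P : Finset (Finset V)} {S : Finset (Sym2 V)} (hspec : Spec P S)
    {R : Finset V} (hR : R ∈ P) : ∀ u ∈ R, ∀ x : V, (gsBC S).Adj u x → x ∈ R := by
  intro u hu x h
  exact walk_confined hspec.1 hspec.2.2.1 hR (SimpleGraph.Walk.cons h SimpleGraph.Walk.nil) hu

private lemma Spec.connOn_filter' {P : Finset (Finset V)} {S : Finset (Sym2 V)}
    (hspec : Spec P S) {R : Finset V} (hR : R ∈ P) :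
    ConnOn R (S.filter fun e => ∀ x ∈ e, x ∈ R) := by
  refine connOn_filter ?_ (spec_closed hspec hR) (hspec.2.2.2 R hR)
  exact Finset.card_pos.mp (by have := hspec.2.1 R hR; omega)

private lemma Spec.biUnion_eq {P : Finset (Finset V)} {S : Finset (Sym2 V)} (hspec : Spec P S) :
    S = P.biUnion (fun R => S.filter fun e => ∀ x ∈ e, x ∈ R) := by
  apply Finset.Subset.antisymm
  · intro e he
    obtain ⟨R, hR, hsub⟩ := hspec.2.2.1 e he
    exact Finset.mem_biUnion.mpr ⟨R, hR, Finset.mem_filter.mpr ⟨he, hsub⟩⟩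
  · intro e he
    obtain ⟨R, _, heR⟩ := Finset.mem_biUnion.mp he
    exact (Finset.mem_filter.mp heR).1

private lemma Spec.filters_disjoint {P : Finset (Finset V)} {S : Finset (Sym2 V)}
    (hspec : Spec P S) :
    ∀ R ∈ P, ∀ R' ∈ P, R ≠ R' →
      Disjoint (S.filter fun e => ∀ x ∈ e, x ∈ R) (S.filter fun e => ∀ x ∈ e, x ∈ R') := by
  intro R hR R' hR' hne
  rw [Finset.disjoint_left]
  intro e he he'
  obtain ⟨x, y⟩ := e
  have hx : x ∈ R := (Finset.mem_filter.mp he).2 x (Sym2.mem_mk_left x y)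
  have hx' : x ∈ R' := (Finset.mem_filter.mp he').2 x (Sym2.mem_mk_left x y)
  exact hne (hspec.uniq hR hR' hx hx')

private lemma Spec.card_eq {P : Finset (Finset V)} {S : Finset (Sym2 V)} (hspec : Spec P S) :
    S.card = ∑ R ∈ P, (S.filter fun e => ∀ x ∈ e, x ∈ R).card := by
  conv_lhs => rw [hspec.biUnion_eq]
  exact Finset.card_biUnion hspec.filters_disjoint

private lemma Spec.ncomp_add_sum {P : Finset (Finset V)} {S : Finset (Sym2 V)}
    (hspec : Spec P S) :
    ncomp S + ∑ R ∈ P, (R.card - 1) = Fintype.card V := by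
  classical
  obtain ⟨hdisj, hcard, hS, hconn⟩ := hspec
  set I : Finset V := Finset.univ.filter (fun v => ∀ R ∈ P, v ∉ R) with hI
  set φ : V → Finset V ⊕ V := fun v =>
    if h : ∃ R ∈ P, v ∈ R then Sum.inl h.choose else Sum.inr v with hφ
  have hφR : ∀ {v : V} {R : Finset V}, R ∈ P → v ∈ R → φ v = Sum.inl R := by
    intro v R hR hv
    have hex : ∃ R ∈ P, v ∈ R := ⟨R, hR, hv⟩
    rw [hφ]
    simp only [dif_pos hex]
    congr 1
    exact Spec.uniq ⟨hdisj, hcard, hS, hconn⟩ hex.choose_spec.1 hR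
      hex.choose_spec.2 hv
  have hφI : ∀ {v : V}, (¬ ∃ R ∈ P, v ∈ R) → φ v = Sum.inr v := by
    intro v hv
    rw [hφ]; simp only [dif_neg hv]
  have hadj : ∀ u x : V, (gsBC S).Adj u x → φ u = φ x := by
    intro u x h
    obtain ⟨he, _⟩ := gs_adj.mp h
    obtain ⟨R, hR, hsub⟩ := hS _ he
    rw [hφR hR (hsub u (Sym2.mem_mk_left u x)), hφR hR (hsub x (Sym2.mem_mk_right u x))]
  have hwalk' : ∀ (u v : V) (p : (gsBC S).Walk u v), φ u = φ v := by
    intro u v p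
    clear_value φ
    induction p with
    | nil => rfl
    | @cons a x b h p ih => exact (hadj a x h).trans ih
  have hwalk : ∀ (u v : V) (p : (gsBC S).Walk u v), p.IsPath → φ u = φ v :=
    fun u v p _ => hwalk' u v p
  haveI : Fintype (gsBC S).ConnectedComponent := Fintype.ofFinite _
  set Φ : (gsBC S).ConnectedComponent → Finset V ⊕ V :=
    SimpleGraph.ConnectedComponent.lift φ hwalk with hΦ
  have hΦmk : ∀ v : V, Φ ((gsBC S).connectedComponentMk v) = φ v := fun _ => rfl
  have hΦinj : Function.Injective Φ := by
    intro c c' h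
    refine SimpleGraph.ConnectedComponent.ind₂
      (β := fun c c' => Φ c = Φ c' → c = c') ?_ c c' h
    intro v w h
    rw [hΦmk, hΦmk] at h
    by_cases hv : ∃ R ∈ P, v ∈ R
    · obtain ⟨R, hR, hvR⟩ := hv
      rw [hφR hR hvR] at h
      by_cases hw : ∃ R ∈ P, w ∈ R
      · obtain ⟨R', hR', hwR⟩ := hw
        rw [hφR hR' hwR] at h
        obtain rfl : R = R' := Sum.inl.inj h
        exact SimpleGraph.ConnectedComponent.sound (hconn R hR v hvR w hwR)
      · rw [hφI hw] at h; exact absurd h (by simp)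
    · rw [hφI hv] at h
      by_cases hw : ∃ R ∈ P, w ∈ R
      · obtain ⟨R', hR', hwR⟩ := hw; rw [hφR hR' hwR] at h; exact absurd h (by simp)
      · rw [hφI hw] at h
        obtain rfl : v = w := Sum.inr.inj h
        rfl
  have himg : Finset.univ.image Φ = P.image Sum.inl ∪ I.image Sum.inr := by
    ext b
    simp only [Finset.mem_image, Finset.mem_univ, true_and, Finset.mem_union]
    constructor
    · rintro ⟨c, rfl⟩
      obtain ⟨v, rfl⟩ := Quot.exists_rep c
      by_cases hv : ∃ R ∈ P, v ∈ R
      · obtain ⟨R, hR, hvR⟩ := hv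
        exact Or.inl ⟨R, hR, ((hΦmk v).trans (hφR hR hvR)).symm⟩
      · refine Or.inr ⟨v, ?_, ((hΦmk v).trans (hφI hv)).symm⟩
        rw [hI, Finset.mem_filter]
        exact ⟨Finset.mem_univ v, fun R hR hvR => hv ⟨R, hR, hvR⟩⟩
    · rintro (⟨R, hR, rfl⟩ | ⟨v, hvI, rfl⟩)
      · have hRne : R.Nonempty := Finset.card_pos.mp (by have := hcard R hR; omega)
        obtain ⟨v, hvR⟩ := hRne
        exact ⟨(gsBC S).connectedComponentMk v, (hΦmk v).trans (hφR hR hvR)⟩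
      · have hv : ¬ ∃ R ∈ P, v ∈ R := by
          rw [hI, Finset.mem_filter] at hvI
          rintro ⟨R, hR, hvR⟩
          exact hvI.2 R hR hvR
        exact ⟨(gsBC S).connectedComponentMk v, (hΦmk v).trans (hφI hv)⟩
  have hdisj' : ∀ x ∈ P, ∀ y ∈ P, x ≠ y → Disjoint (id x) (id y) := fun x hx y hy hxy =>
    hdisj (Finset.mem_coe.mpr hx) (Finset.mem_coe.mpr hy) hxy
  have hI_card : I.card = Fintype.card V - ∑ R ∈ P, R.card := by
    have hIeq : I = Finset.univ \ P.biUnion id := by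
      ext v
      simp only [hI, Finset.mem_filter, Finset.mem_univ, true_and, Finset.mem_sdiff,
        Finset.mem_biUnion, not_exists, not_and, id]
    rw [hIeq, Finset.card_sdiff_of_subset (Finset.subset_univ _), Finset.card_univ,
      Finset.card_biUnion hdisj']
    rfl
  have hsum_le : ∑ R ∈ P, R.card ≤ Fintype.card V := by
    have h1 : (P.biUnion id).card = ∑ R ∈ P, R.card := Finset.card_biUnion hdisj'
    rw [← h1]
    exact (Finset.card_le_univ _).trans (le_of_eq Finset.card_univ)
  have hsum1 : ∑ R ∈ P, (R.card - 1) + P.card = ∑ R ∈ P, R.card := by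
    have h1 : ∀ R ∈ P, (R.card - 1) + 1 = R.card := fun R hR => by
      have := hcard R hR; omega
    calc ∑ R ∈ P, (R.card - 1) + P.card = ∑ R ∈ P, ((R.card - 1) + 1) := by
          rw [Finset.sum_add_distrib, Finset.sum_const, smul_eq_mul, mul_one]
      _ = ∑ R ∈ P, R.card := Finset.sum_congr rfl h1
  have hcount : ncomp S = P.card + I.card := by
    have hinl_inr : Disjoint (P.image Sum.inl) (I.image (Sum.inr (α := Finset V))) := by
      rw [Finset.disjoint_left]
      rintro b hb hb'
      obtain ⟨R, _, rfl⟩ := Finset.mem_image.mp hb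
      obtain ⟨v, _, h⟩ := Finset.mem_image.mp hb'
      cases h
    calc ncomp S = Fintype.card (gsBC S).ConnectedComponent := by
          rw [ncomp, Nat.card_eq_fintype_card]
      _ = (Finset.univ : Finset (gsBC S).ConnectedComponent).card := Finset.card_univ.symm
      _ = (Finset.univ.image Φ).card := (Finset.card_image_of_injective _ hΦinj).symm
      _ = (P.image Sum.inl).card + (I.image Sum.inr).card := by
          rw [himg, Finset.card_union_of_disjoint hinl_inr]
      _ = P.card + I.card := by
          rw [Finset.card_image_of_injective _ Sum.inl_injective,
            Finset.card_image_of_injective _ Sum.inr_injective]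
  omega


private lemma attach_biUnion_eq {α β : Type*} [DecidableEq β] (s : Finset α)
    (f : α → Finset β) : s.attach.biUnion (fun x => f x.1) = s.biUnion f := by
  ext b
  simp only [Finset.mem_biUnion, Finset.mem_attach, true_and, Subtype.exists]
  constructor
  · rintro ⟨a, ha, h⟩; exact ⟨a, ha, h⟩
  · rintro ⟨a, ha, h⟩; exact ⟨a, ha, h⟩

variable (G : SimpleGraph V) [DecidableRel G.Adj]

private lemma spec_of_subset {S : Finset (Sym2 V)} (hSE : S ⊆ G.edgeFinset) :
    Spec (comps S) S := by
  have hadjG : ∀ {x y : V}, s(x, y) ∈ S → (gsBC S).Adj x y := by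
    intro x y h
    refine gs_adj.mpr ⟨h, ?_⟩
    exact ((G.mem_edgeSet).mp (SimpleGraph.mem_edgeFinset.mp (hSE h))).ne
  have hmem : ∀ {v : V}, (∃ e ∈ S, v ∈ e) → compSet S v ∈ comps S := by
    intro v hv
    exact Finset.mem_image_of_mem _ (Finset.mem_filter.mpr ⟨Finset.mem_univ v, hv⟩)
  refine ⟨?_, ?_, ?_, ?_⟩
  · rintro a ha b hb hne
    rw [Finset.mem_coe] at ha hb
    obtain ⟨v, _, rfl⟩ := Finset.mem_image.mp ha
    obtain ⟨w, _, rfl⟩ := Finset.mem_image.mp hb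
    rw [Finset.disjoint_left]
    intro u hu hu'
    apply hne
    rw [mem_compSet] at hu hu'
    ext z
    rw [mem_compSet, mem_compSet]
    exact ⟨fun h => hu'.trans (hu.symm.trans h), fun h => hu.trans (hu'.symm.trans h)⟩
  · intro R hR
    obtain ⟨v, hvfil, rfl⟩ := Finset.mem_image.mp hR
    obtain ⟨e, he, hve⟩ := (Finset.mem_filter.mp hvfil).2
    obtain ⟨x, y⟩ := e
    have hxy : (gsBC S).Adj x y := hadjG he
    rcases Sym2.mem_iff.mp hve with rfl | rfl
    · exact Finset.one_lt_card.mpr ⟨v, mem_compSet.mpr (SimpleGraph.Reachable.refl v), y,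
        mem_compSet.mpr hxy.reachable, hxy.ne⟩
    · exact Finset.one_lt_card.mpr ⟨x, mem_compSet.mpr hxy.symm.reachable, v,
        mem_compSet.mpr (SimpleGraph.Reachable.refl v), hxy.ne⟩
  · intro e he
    obtain ⟨x, y⟩ := e
    have hxy : (gsBC S).Adj x y := hadjG he
    refine ⟨compSet S x, hmem ⟨s(x, y), he, Sym2.mem_mk_left x y⟩, ?_⟩
    intro v hv
    rcases Sym2.mem_iff.mp hv with rfl | rfl
    · exact mem_compSet.mpr (SimpleGraph.Reachable.refl v)
    · exact mem_compSet.mpr hxy.reachable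
  · intro R hR u hu v hv
    obtain ⟨w, _, rfl⟩ := Finset.mem_image.mp hR
    exact (mem_compSet.mp hu).symm.trans (mem_compSet.mp hv)

private lemma comps_valid {S : Finset (Sym2 V)} (hSE : S ⊆ G.edgeFinset) :
    (∀ R ∈ comps S, ConnOn R (edgesIn G R) ∧ 2 ≤ R.card) ∧
      ((comps S : Set (Finset V))).Pairwise Disjoint := by
  have hspec := spec_of_subset G hSE
  refine ⟨fun R hR => ⟨?_, hspec.2.1 R hR⟩, hspec.1⟩
  refine connOn_mono ?_ (hspec.connOn_filter' hR)
  intro e hefil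
  obtain ⟨heS, hin⟩ := Finset.mem_filter.mp hefil
  exact Finset.mem_filter.mpr ⟨hSE heS, hin⟩

private lemma fiber_sum (q : ℕ) (hq : 0 < q) {P : Finset (Finset V)}
    (hval1 : ∀ R ∈ P, ConnOn R (edgesIn G R) ∧ 2 ≤ R.card)
    (hval2 : (P : Set (Finset V)).Pairwise Disjoint) :
    ∑ S ∈ G.edgeFinset.powerset.filter (fun S => comps S = P),
        (-1 : ℚ) ^ S.card * (q : ℚ) ^ ncomp S
      = (q : ℚ) ^ Fintype.card V *
        ∏ R ∈ P, (1 / (q : ℚ) ^ (R.card - 1)) *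
          ∑ g ∈ (edgesIn G R).powerset.filter (IsCSS G R), (-1 : ℚ) ^ g.card := by
  classical
  set t : Finset V → Finset (Finset (Sym2 V)) :=
    fun R => (edgesIn G R).powerset.filter (IsCSS G R) with ht
  have hrhs : (q : ℚ) ^ Fintype.card V *
      ∏ R ∈ P, (1 / (q : ℚ) ^ (R.card - 1)) * ∑ g ∈ t R, (-1 : ℚ) ^ g.card
      = ∑ γ ∈ P.pi t, (q : ℚ) ^ Fintype.card V *
          ∏ R ∈ P.attach, (1 / (q : ℚ) ^ (R.1.card - 1)) * (-1 : ℚ) ^ (γ R.1 R.2).card := by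
    have hps := Finset.prod_sum (s := P) (t := t)
      (f := fun R g => (1 / (q : ℚ) ^ (R.card - 1)) * (-1 : ℚ) ^ g.card)
    rw [← Finset.mul_sum, ← hps]
    congr 1
    refine Finset.prod_congr rfl fun R _ => ?_
    rw [Finset.mul_sum]
  rw [hrhs]
  set i : Finset (Sym2 V) → (∀ a ∈ P, Finset (Sym2 V)) :=
    fun S R _ => S.filter (fun e => ∀ x ∈ e, x ∈ R) with hi_def
  set j : (∀ a ∈ P, Finset (Sym2 V)) → Finset (Sym2 V) :=
    fun γ => P.attach.biUnion (fun R => γ R.1 R.2) with hj_def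
  have hspec_of_fiber : ∀ S ∈ G.edgeFinset.powerset.filter (fun S => comps S = P),
      Spec P S := by
    intro S hS
    obtain ⟨hpow, hcomps⟩ := Finset.mem_filter.mp hS
    exact hcomps ▸ spec_of_subset G (Finset.mem_powerset.mp hpow)
  have hγt : ∀ γ ∈ P.pi t, ∀ (R : Finset V) (hR : R ∈ P),
      γ R hR ⊆ edgesIn G R ∧ IsCSS G R (γ R hR) := by
    intro γ hγ R hR
    have := Finset.mem_pi.mp hγ R hR
    rw [ht, Finset.mem_filter, Finset.mem_powerset] at this
    exact this
  have hspec_of_pi : ∀ γ ∈ P.pi t, Spec P (j γ) := by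
    intro γ hγ
    refine ⟨hval2, fun R hR => (hval1 R hR).2, ?_, ?_⟩
    · intro e he
      obtain ⟨R, _, heR⟩ := Finset.mem_biUnion.mp he
      refine ⟨R.1, R.2, ?_⟩
      have := (hγt γ hγ R.1 R.2).1 heR
      exact (Finset.mem_filter.mp this).2
    · intro R hR u hu v hv
      have hcss := (hγt γ hγ R hR).2
      refine connOn_reachable hcss.2 ?_ hu hv
      exact Finset.subset_biUnion_of_mem (fun R : {x // x ∈ P} => γ R.1 R.2)
        (Finset.mem_attach P ⟨R, hR⟩)
  have hi : ∀ S ∈ G.edgeFinset.powerset.filter (fun S => comps S = P), i S ∈ P.pi t := by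
    intro S hS
    have hspec := hspec_of_fiber S hS
    have hSE := Finset.mem_powerset.mp (Finset.mem_filter.mp hS).1
    refine Finset.mem_pi.mpr fun R hR => ?_
    rw [ht, Finset.mem_filter, Finset.mem_powerset]
    have hsub : S.filter (fun e => ∀ x ∈ e, x ∈ R) ⊆ edgesIn G R := by
      intro e hefil
      obtain ⟨heS, hin⟩ := Finset.mem_filter.mp hefil
      exact Finset.mem_filter.mpr ⟨hSE heS, hin⟩
    exact ⟨hsub, hsub, hspec.connOn_filter' hR⟩
  have hj : ∀ γ ∈ P.pi t, j γ ∈ G.edgeFinset.powerset.filter (fun S => comps S = P) := by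
    intro γ hγ
    rw [Finset.mem_filter, Finset.mem_powerset]
    constructor
    · intro e he
      obtain ⟨R, _, heR⟩ := Finset.mem_biUnion.mp he
      exact Finset.filter_subset _ _ ((hγt γ hγ R.1 R.2).1 heR)
    · exact (hspec_of_pi γ hγ).comps_eq
  have hleft : ∀ S ∈ G.edgeFinset.powerset.filter (fun S => comps S = P), j (i S) = S := by
    intro S hS
    have hspec := hspec_of_fiber S hS
    show P.attach.biUnion (fun R => S.filter (fun e => ∀ x ∈ e, x ∈ R.1)) = S
    apply Finset.Subset.antisymm
    · intro e he
      obtain ⟨R, _, heR⟩ := Finset.mem_biUnion.mp he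
      exact (Finset.mem_filter.mp heR).1
    · intro e he
      obtain ⟨R, hR, hsub⟩ := hspec.2.2.1 e he
      exact Finset.mem_biUnion.mpr
        ⟨⟨R, hR⟩, Finset.mem_attach _ _, Finset.mem_filter.mpr ⟨he, hsub⟩⟩
  have hright : ∀ γ ∈ P.pi t, i (j γ) = γ := by
    intro γ hγ
    funext R hR
    show (j γ).filter (fun e => ∀ x ∈ e, x ∈ R) = γ R hR
    apply Finset.Subset.antisymm
    · intro e hefil
      obtain ⟨hej, hin⟩ := Finset.mem_filter.mp hefil
      obtain ⟨R', _, heR'⟩ := Finset.mem_biUnion.mp hej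
      have hend : ∀ x ∈ e, x ∈ R'.1 :=
        (Finset.mem_filter.mp ((hγt γ hγ R'.1 R'.2).1 heR')).2
      obtain ⟨x, y⟩ := e
      have hxR : x ∈ R := hin x (Sym2.mem_mk_left x y)
      have hxR' : x ∈ R'.1 := hend x (Sym2.mem_mk_left x y)
      have hRR : R = R'.1 := by
        by_contra hne
        exact (Finset.disjoint_left.mp (hval2 (Finset.mem_coe.mpr hR)
          (Finset.mem_coe.mpr R'.2) hne)) hxR hxR'
      subst hRR
      exact heR'
    · intro e he
      refine Finset.mem_filter.mpr ⟨?_, ?_⟩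
      · exact Finset.subset_biUnion_of_mem (fun R : {x // x ∈ P} => γ R.1 R.2)
          (Finset.mem_attach P ⟨R, hR⟩) he
      · exact (Finset.mem_filter.mp ((hγt γ hγ R hR).1 he)).2
  have hq0 : ((q : ℚ)) ≠ 0 := Nat.cast_ne_zero.mpr hq.ne'
  refine Finset.sum_nbij' i j hi hj hleft hright ?_
  intro S hS
  have hspec := hspec_of_fiber S hS
  have key : (q : ℚ) ^ ncomp S * (q : ℚ) ^ (∑ R ∈ P, (R.card - 1))
      = (q : ℚ) ^ Fintype.card V := by
    rw [← pow_add, hspec.ncomp_add_sum]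
  have hsplit : ∏ R ∈ P.attach, (1 / (q : ℚ) ^ (R.1.card - 1)) *
        (-1 : ℚ) ^ ((S.filter fun e => ∀ x ∈ e, x ∈ R.1).card)
      = (1 / (q : ℚ) ^ (∑ R ∈ P, (R.card - 1))) * (-1 : ℚ) ^ S.card := by
    rw [Finset.prod_mul_distrib]
    congr 1
    · rw [Finset.prod_attach P (fun R => 1 / (q : ℚ) ^ (R.card - 1))]
      simp only [one_div]
      rw [Finset.prod_inv_distrib, Finset.prod_pow_eq_pow_sum]
    · rw [Finset.prod_attach P
        (fun R => (-1 : ℚ) ^ ((S.filter fun e => ∀ x ∈ e, x ∈ R).card)),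
        Finset.prod_pow_eq_pow_sum, ← hspec.card_eq]
  show (-1 : ℚ) ^ S.card * (q : ℚ) ^ ncomp S
      = (q : ℚ) ^ Fintype.card V * ∏ R ∈ P.attach, (1 / (q : ℚ) ^ (R.1.card - 1)) *
          (-1 : ℚ) ^ ((S.filter fun e => ∀ x ∈ e, x ∈ R.1).card)
  rw [hsplit, ← key]
  have hqn : ((q : ℚ)) ^ (∑ R ∈ P, (R.card - 1)) ≠ 0 := pow_ne_zero _ hq0
  field_simp

private lemma walk_const {q : ℕ} (f : V → Fin q) {S : Finset (Sym2 V)}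
    (hf : ∀ e ∈ S, (Sym2.map f e).IsDiag) :
    ∀ (v w : V), (gsBC S).Walk v w → f v = f w := by
  intro v w p
  induction p with
  | nil => rfl
  | @cons a x b h p ih =>
    have hd := hf _ (gs_adj.mp h).1
    rw [Sym2.map_pair_eq, Sym2.mk_isDiag_iff] at hd
    exact hd.trans ih

private lemma card_diag (q : ℕ) (S : Finset (Sym2 V)) :
    (Finset.univ.filter fun f : V → Fin q => ∀ e ∈ S, (Sym2.map f e).IsDiag).card
      = q ^ ncomp S := by
  classical
  haveI : Fintype (gsBC S).ConnectedComponent := Fintype.ofFinite _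
  have hback : ∀ g : (gsBC S).ConnectedComponent → Fin q, ∀ e ∈ S,
      (Sym2.map (fun v => g ((gsBC S).connectedComponentMk v)) e).IsDiag := by
    intro g e he
    obtain ⟨x, y⟩ := e
    rw [Sym2.map_pair_eq, Sym2.mk_isDiag_iff]
    by_cases hxy : x = y
    · rw [hxy]
    · exact congrArg g (SimpleGraph.ConnectedComponent.sound
        (SimpleGraph.Adj.reachable (gs_adj.mpr ⟨he, hxy⟩)))
  have e1 : {f : V → Fin q // ∀ e ∈ S, (Sym2.map f e).IsDiag}
      ≃ ((gsBC S).ConnectedComponent → Fin q) :=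
    { toFun := fun f => SimpleGraph.ConnectedComponent.lift f.1
        (fun v w p _ => walk_const f.1 f.2 v w p)
      invFun := fun g => ⟨fun v => g ((gsBC S).connectedComponentMk v), hback g⟩
      left_inv := fun f => Subtype.ext rfl
      right_inv := fun g => by
        funext c
        obtain ⟨v, rfl⟩ := Quot.exists_rep c
        rfl }
  calc (Finset.univ.filter fun f : V → Fin q => ∀ e ∈ S, (Sym2.map f e).IsDiag).card
      = Fintype.card {f : V → Fin q // ∀ e ∈ S, (Sym2.map f e).IsDiag} :=
        (Fintype.card_subtype _).symm
    _ = Fintype.card ((gsBC S).ConnectedComponent → Fin q) := Fintype.card_congr e1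
    _ = (Fintype.card (Fin q)) ^ (Fintype.card (gsBC S).ConnectedComponent) :=
        Fintype.card_fun
    _ = q ^ ncomp S := by rw [Fintype.card_fin, ncomp, Nat.card_eq_fintype_card]

private lemma coloring_card (q : ℕ) :
    Nat.card (G.Coloring (Fin q))
      = (Finset.univ.filter fun f : V → Fin q =>
          ∀ e ∈ G.edgeFinset, ¬ (Sym2.map f e).IsDiag).card := by
  classical
  have hto : ∀ C : G.Coloring (Fin q), ∀ e ∈ G.edgeFinset, ¬ (Sym2.map (⇑C) e).IsDiag := by
    intro C e he
    obtain ⟨x, y⟩ := e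
    rw [Sym2.map_pair_eq, Sym2.mk_isDiag_iff]
    exact C.valid ((G.mem_edgeSet).mp (SimpleGraph.mem_edgeFinset.mp he))
  have hfrom : ∀ f : {f : V → Fin q // ∀ e ∈ G.edgeFinset, ¬ (Sym2.map f e).IsDiag},
      ∀ {v w : V}, G.Adj v w → f.1 v ≠ f.1 w := by
    intro f v w hadj
    have := f.2 s(v, w) (SimpleGraph.mem_edgeFinset.mpr ((G.mem_edgeSet).mpr hadj))
    rw [Sym2.map_pair_eq, Sym2.mk_isDiag_iff] at this
    exact this
  have e1 : G.Coloring (Fin q) ≃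
      {f : V → Fin q // ∀ e ∈ G.edgeFinset, ¬ (Sym2.map f e).IsDiag} :=
    { toFun := fun C => ⟨⇑C, hto C⟩
      invFun := fun f => SimpleGraph.Coloring.mk f.1 (hfrom f)
      left_inv := fun C => rfl
      right_inv := fun f => rfl }
  rw [Nat.card_congr e1, Nat.card_eq_fintype_card, Fintype.card_subtype]

private lemma incl_excl (q : ℕ) :
    (((Finset.univ.filter fun f : V → Fin q =>
        ∀ e ∈ G.edgeFinset, ¬ (Sym2.map f e).IsDiag).card : ℚ))
      = ∑ S ∈ G.edgeFinset.powerset, (-1 : ℚ) ^ S.card *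
          ((Finset.univ.filter fun f : V → Fin q =>
            ∀ e ∈ S, (Sym2.map f e).IsDiag).card : ℚ) := by
  classical
  have hf : ∀ f : V → Fin q,
      (if (∀ e ∈ G.edgeFinset, ¬ (Sym2.map f e).IsDiag) then (1 : ℚ) else 0)
        = ∑ S ∈ G.edgeFinset.powerset, (-1 : ℚ) ^ S.card *
            (if (∀ e ∈ S, (Sym2.map f e).IsDiag) then (1 : ℚ) else 0) := by
    intro f
    have expand := Finset.prod_add
      (fun e => -(if (Sym2.map f e).IsDiag then (1 : ℚ) else 0)) (fun _ => (1 : ℚ))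
      G.edgeFinset
    have hL : ∏ e ∈ G.edgeFinset,
        ((-(if (Sym2.map f e).IsDiag then (1 : ℚ) else 0)) + 1)
        = (if (∀ e ∈ G.edgeFinset, ¬ (Sym2.map f e).IsDiag) then (1 : ℚ) else 0) := by
      by_cases hall : ∀ e ∈ G.edgeFinset, ¬ (Sym2.map f e).IsDiag
      · rw [if_pos hall]
        refine Finset.prod_eq_one fun e he => ?_
        rw [if_neg (hall e he)]
        ring
      · rw [if_neg hall]
        push_neg at hall
        obtain ⟨e, he, hd⟩ := hall
        refine Finset.prod_eq_zero he ?_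
        rw [if_pos hd]
        ring
    have hR : ∀ S ∈ G.edgeFinset.powerset,
        (∏ e ∈ S, -(if (Sym2.map f e).IsDiag then (1 : ℚ) else 0)) *
            ∏ e ∈ G.edgeFinset \ S, (1 : ℚ)
          = (-1 : ℚ) ^ S.card * (if (∀ e ∈ S, (Sym2.map f e).IsDiag) then (1 : ℚ) else 0) := by
      intro S _
      rw [Finset.prod_const_one, mul_one]
      calc ∏ e ∈ S, -(if (Sym2.map f e).IsDiag then (1 : ℚ) else 0)
          = ∏ e ∈ S, ((-1) * (if (Sym2.map f e).IsDiag then (1 : ℚ) else 0)) := by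
            refine Finset.prod_congr rfl fun e _ => by ring
        _ = ((-1 : ℚ) ^ S.card) * ∏ e ∈ S, (if (Sym2.map f e).IsDiag then (1 : ℚ) else 0) := by
            rw [Finset.prod_mul_distrib, Finset.prod_const]
        _ = _ := by
            congr 1
            by_cases hall : ∀ e ∈ S, (Sym2.map f e).IsDiag
            · rw [if_pos hall]
              exact Finset.prod_eq_one fun e he => if_pos (hall e he)
            · rw [if_neg hall]
              push_neg at hall
              obtain ⟨e, he, hd⟩ := hall
              exact Finset.prod_eq_zero he (if_neg hd)
    rw [← hL, expand]
    exact Finset.sum_congr rfl hR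
  calc ((Finset.univ.filter fun f : V → Fin q =>
        ∀ e ∈ G.edgeFinset, ¬ (Sym2.map f e).IsDiag).card : ℚ)
      = ∑ f : V → Fin q,
          (if (∀ e ∈ G.edgeFinset, ¬ (Sym2.map f e).IsDiag) then (1 : ℚ) else 0) := by
        rw [Finset.sum_boole]
    _ = ∑ f : V → Fin q, ∑ S ∈ G.edgeFinset.powerset, (-1 : ℚ) ^ S.card *
          (if (∀ e ∈ S, (Sym2.map f e).IsDiag) then (1 : ℚ) else 0) :=
        Finset.sum_congr rfl fun f _ => hf f
    _ = ∑ S ∈ G.edgeFinset.powerset, ∑ f : V → Fin q, (-1 : ℚ) ^ S.card *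
          (if (∀ e ∈ S, (Sym2.map f e).IsDiag) then (1 : ℚ) else 0) := Finset.sum_comm
    _ = _ := by
        refine Finset.sum_congr rfl fun S _ => ?_
        rw [← Finset.mul_sum, Finset.sum_boole]

private lemma whitney (q : ℕ) :
    (Nat.card (G.Coloring (Fin q)) : ℚ)
      = ∑ S ∈ G.edgeFinset.powerset, (-1 : ℚ) ^ S.card * (q : ℚ) ^ (ncomp S) := by
  rw [coloring_card G q, incl_excl G q]
  refine Finset.sum_congr rfl fun S _ => ?_
  rw [card_diag q S]
  push_cast
  ring

end PolymerAux

/-- Polymer-gas representation of the chromatic polynomial. -/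
theorem polymer_representation [Fintype V] [DecidableEq V] (G : SimpleGraph V)
    [DecidableRel G.Adj] (q : ℕ) (hq : 0 < q) :
    (Nat.card (G.Coloring (Fin q)) : ℚ) =
      (q : ℚ) ^ Fintype.card V *
        ∑ P ∈ (Finset.univ : Finset (Finset (Finset V))).filter
            (fun P => (∀ R ∈ P, ConnOn R (edgesIn G R) ∧ 2 ≤ R.card) ∧
              (P : Set (Finset V)).Pairwise Disjoint),
          ∏ R ∈ P, (1 / (q : ℚ) ^ (R.card - 1)) *
            ∑ g ∈ (edgesIn G R).powerset.filter (IsCSS G R), (-1 : ℚ) ^ g.card := by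
  classical
  set T : Finset (Finset (Finset V)) :=
    (Finset.univ : Finset (Finset (Finset V))).filter
      (fun P => (∀ R ∈ P, ConnOn R (edgesIn G R) ∧ 2 ≤ R.card) ∧
        (P : Set (Finset V)).Pairwise Disjoint) with hT
  have hmap : ∀ S ∈ G.edgeFinset.powerset, comps S ∈ T := by
    intro S hS
    rw [hT, Finset.mem_filter]
    exact ⟨Finset.mem_univ _, comps_valid G (Finset.mem_powerset.mp hS)⟩
  have hmid : ∑ S ∈ G.edgeFinset.powerset, (-1 : ℚ) ^ S.card * (q : ℚ) ^ (ncomp S)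
      = ∑ P ∈ T, ∑ S ∈ G.edgeFinset.powerset.filter (fun S => comps S = P),
          (-1 : ℚ) ^ S.card * (q : ℚ) ^ (ncomp S) :=
    (Finset.sum_fiberwise_of_maps_to hmap _).symm
  have key : (Nat.card (G.Coloring (Fin q)) : ℚ)
      = (q : ℚ) ^ Fintype.card V * ∑ P ∈ T,
          ∏ R ∈ P, (1 / (q : ℚ) ^ (R.card - 1)) *
            ∑ g ∈ (edgesIn G R).powerset.filter (IsCSS G R), (-1 : ℚ) ^ g.card := by
    calc (Nat.card (G.Coloring (Fin q)) : ℚ)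
        = ∑ S ∈ G.edgeFinset.powerset, (-1 : ℚ) ^ S.card * (q : ℚ) ^ (ncomp S) := whitney G q
      _ = ∑ P ∈ T, ∑ S ∈ G.edgeFinset.powerset.filter (fun S => comps S = P),
            (-1 : ℚ) ^ S.card * (q : ℚ) ^ (ncomp S) := hmid
      _ = ∑ P ∈ T, (q : ℚ) ^ Fintype.card V *
            ∏ R ∈ P, (1 / (q : ℚ) ^ (R.card - 1)) *
              ∑ g ∈ (edgesIn G R).powerset.filter (IsCSS G R), (-1 : ℚ) ^ g.card := by
          refine Finset.sum_congr rfl fun P hP => ?_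
          rw [hT, Finset.mem_filter] at hP
          exact fiber_sum G q hq hP.2.1 hP.2.2
      _ = (q : ℚ) ^ Fintype.card V * ∑ P ∈ T,
            ∏ R ∈ P, (1 / (q : ℚ) ^ (R.card - 1)) *
              ∑ g ∈ (edgesIn G R).powerset.filter (IsCSS G R), (-1 : ℚ) ^ g.card :=
        (Finset.mul_sum T _ _).symm
  rw [key]
  congr 1
  have hQtoF : ∀ (Q : Finset (Finset V)) (inst : Fintype ((Q : Set (Finset V)))),
      @Set.toFinset _ (Q : Set (Finset V)) inst = Q := by
    intro Q inst
    ext x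
    rw [Set.mem_toFinset, Finset.mem_coe]
  refine Finset.sum_nbij' (fun Q => (Q : Set (Finset V))) (fun P => P.toFinset)
    ?_ ?_ ?_ ?_ ?_
  · intro Q hQ
    rw [hT, Finset.mem_filter] at hQ
    refine Finset.mem_filter.mpr ⟨?_, ?_, ?_⟩
    · exact Finset.mem_sup.mpr ⟨Q, Finset.mem_univ Q, Finset.mem_singleton_self _⟩
    · intro R hR
      exact hQ.2.1 R hR
    · exact hQ.2.2
  · intro P hP
    obtain ⟨hPD, hP1, hP2⟩ := Finset.mem_filter.mp hP
    obtain ⟨a, -, hPa⟩ := Finset.mem_sup.mp hPD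
    rw [hT, Finset.mem_filter]
    refine ⟨Finset.mem_univ _, ?_, ?_⟩
    · intro R hR
      exact hP1 R (Set.mem_toFinset.mp hR)
    · rw [Set.coe_toFinset]
      exact hP2
  · intro Q hQ
    exact hQtoF Q _
  · intro P hP
    exact Set.coe_toFinset P
  · intro Q hQ
    rw [hQtoF Q _]

end BC
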